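/- Let Gⁱ be a spray on U and let θᵢ be a semi-basic 1-form satisfying at every point: yʲ ∂θᵢ/∂yʲ = 0, ∂θᵢ/∂yʲ = ∂θⱼ/∂yⁱ, and δθᵢ/δxʲ = δθⱼ/δxⁱ. Then the function F := yᵏθᵏ satisfies ∂F/∂yⁱ = θᵢ and ∂F/∂xⁱ = S(θᵢ) = yᵏ ∂θᵢ/∂xᵏ − 2Gᵏ ∂θᵢ/∂yᵏ for all i; that is, L_S θ = dF. -/

import Mathlib

namespace PM

abbrev E (n : ℕ) := (Fin n → ℝ) × (Fin n → ℝ)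

noncomputable def pdx {n : ℕ} (i : Fin n) (f : E n → ℝ) (z : E n) : ℝ :=
  fderiv ℝ f z (Pi.single i 1, 0)

noncomputable def pdy {n : ℕ} (i : Fin n) (f : E n → ℝ) (z : E n) : ℝ :=
  fderiv ℝ f z (0, Pi.single i 1)

def Dom {n : ℕ} (U : Set (Fin n → ℝ)) : Set (E n) := U ×ˢ {y : Fin n → ℝ | y ≠ 0}

/-- A spray in local coordinates: an `n`-tuple of smooth functions on
`U × (ℝⁿ∖{0})`, positively `2`-homogeneous in `y`. -/
def IsSpray {n : ℕ} (U : Set (Fin n → ℝ)) (G : Fin n → E n → ℝ) : Prop :=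
  (∀ i, ContDiffOn ℝ (⊤ : ℕ∞) (G i) (Dom U)) ∧
  ∀ i, ∀ x ∈ U, ∀ y : Fin n → ℝ, y ≠ 0 → ∀ L : ℝ, 0 < L →
    G i (x, L • y) = L ^ 2 * G i (x, y)

/-- Nonlinear connection `Nⁱⱼ = ∂Gⁱ/∂yʲ`. -/
noncomputable def Nc {n : ℕ} (G : Fin n → E n → ℝ) (i j : Fin n) (z : E n) : ℝ :=
  pdy j (G i) z

/-- Horizontal derivative `δf/δxʲ = ∂f/∂xʲ − Nᵏⱼ ∂f/∂yᵏ`. -/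
noncomputable def delx {n : ℕ} (G : Fin n → E n → ℝ) (j : Fin n) (f : E n → ℝ) (z : E n) : ℝ :=
  pdx j f z - ∑ k, Nc G k j z * pdy k f z

/-- Spray derivative `S(f) = yᵏ ∂f/∂xᵏ − 2Gᵏ ∂f/∂yᵏ`. -/
noncomputable def Sder {n : ℕ} (G : Fin n → E n → ℝ) (f : E n → ℝ) (z : E n) : ℝ :=
  (∑ k, z.2 k * pdx k f z) - 2 * ∑ k, G k z * pdy k f z

/-- Curvature tensor `Rⁱⱼₖ = δNⁱⱼ/δxᵏ − δNⁱₖ/δxʲ`. -/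
noncomputable def Rcurv {n : ℕ} (G : Fin n → E n → ℝ) (i j k : Fin n) (z : E n) : ℝ :=
  delx G k (Nc G i j) z - delx G j (Nc G i k) z

/-- Jacobi endomorphism `Rⁱⱼ = 2 δGⁱ/δxʲ − S(Nⁱⱼ) + Nⁱₖ Nᵏⱼ`. -/
noncomputable def RJac {n : ℕ} (G : Fin n → E n → ℝ) (i j : Fin n) (z : E n) : ℝ :=
  2 * delx G j (G i) z - Sder G (Nc G i j) z + ∑ k, Nc G i k z * Nc G k j z

noncomputable def sq {n : ℕ} (F : E n → ℝ) : E n → ℝ := fun w => F w ^ 2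

/-- The `2n×2n` matrix of `dθ` for a semi-basic 1-form `θ`. -/
noncomputable def dthetaMat {n : ℕ} (θ : Fin n → E n → ℝ) (z : E n) :
    Matrix (Fin n ⊕ Fin n) (Fin n ⊕ Fin n) ℝ :=
  Matrix.fromBlocks
    (Matrix.of fun i j => pdx i (θ j) z - pdx j (θ i) z)
    (Matrix.of fun i j => -(pdy j (θ i) z))
    (Matrix.of fun i j => pdy i (θ j) z)
    0

/-- Finsler function in local coordinates. -/
def IsFinsler {n : ℕ} (U : Set (Fin n → ℝ)) (F : E n → ℝ) : Prop :=
  ContinuousOn F (U ×ˢ (Set.univ : Set (Fin n → ℝ))) ∧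
  ContDiffOn ℝ (⊤ : ℕ∞) F (Dom U) ∧
  (∀ z ∈ Dom U, 0 < F z) ∧
  (∀ x ∈ U, F (x, 0) = 0) ∧
  (∀ x ∈ U, ∀ y : Fin n → ℝ, ∀ L : ℝ, 0 < L → F (x, L • y) = L * F (x, y)) ∧
  (∀ z ∈ Dom U,
    (Matrix.of (fun i j : Fin n => (1 / 2 : ℝ) * pdy i (pdy j (sq F)) z)).rank = n)

/-- Geodesic coefficients of a Finsler function:
`yᵏ ∂²F²/∂xᵏ∂yⁱ − 2G_Fᵏ ∂²F²/∂yᵏ∂yⁱ = ∂F²/∂xⁱ`. -/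
def IsGeodesicCoeffs {n : ℕ} (U : Set (Fin n → ℝ)) (F : E n → ℝ)
    (GF : Fin n → E n → ℝ) : Prop :=
  (∀ i, ContDiffOn ℝ (⊤ : ℕ∞) (GF i) (Dom U)) ∧
  ∀ z ∈ Dom U, ∀ i : Fin n,
    (∑ k, z.2 k * pdx k (pdy i (sq F)) z)
      - 2 * ∑ k, GF k z * pdy k (pdy i (sq F)) z = pdx i (sq F) z

/-- Positively 1-homogeneous in `y`. -/
def PosHomog1 {n : ℕ} (U : Set (Fin n → ℝ)) (P : E n → ℝ) : Prop :=
  ∀ x ∈ U, ∀ y : Fin n → ℝ, y ≠ 0 → ∀ L : ℝ, 0 < L → P (x, L • y) = L * P (x, y)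

/-- A spray is projectively metrizable if `Gⁱ = G_Fⁱ + P yⁱ` for a Finsler
function `F` with geodesic coefficients `G_Fⁱ` and a smooth positively
1-homogeneous `P`. -/
def ProjectivelyMetrizable {n : ℕ} (U : Set (Fin n → ℝ)) (G : Fin n → E n → ℝ) : Prop :=
  ∃ (F : E n → ℝ) (GF : Fin n → E n → ℝ) (P : E n → ℝ),
    IsFinsler U F ∧ IsGeodesicCoeffs U F GF ∧
    ContDiffOn ℝ (⊤ : ℕ∞) P (Dom U) ∧ PosHomog1 U P ∧
    ∀ z ∈ Dom U, ∀ i, G i z = GF i z + P z * z.2 i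


theorem fderiv_v {n : ℕ} (f : E n → ℝ) (z : E n) (y : Fin n → ℝ) :
    (fderiv ℝ f z) (0, y) = ∑ j, y j * (fderiv ℝ f z) (0, Pi.single j 1) := by
  have hy : ((0, y) : E n) = ∑ j, y j • (((0 : Fin n → ℝ), (Pi.single j 1 : Fin n → ℝ)) : E n) := by
    ext k
    · simp [Prod.fst_sum]
    · simp [Prod.snd_sum, Finset.sum_apply, Pi.single_apply, mul_ite]
  rw [hy, map_sum]
  refine Finset.sum_congr rfl fun j _ => ?_
  rw [map_smul]; rfl

theorem isOpen_dom {n : ℕ} {U : Set (Fin n → ℝ)} (hU : IsOpen U) : IsOpen (Dom U) :=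
  hU.prod (isOpen_compl_singleton)

theorem euler {n : ℕ} {U : Set (Fin n → ℝ)} (hU : IsOpen U) {G : Fin n → E n → ℝ}
    (hG : IsSpray U G) {z : E n} (hz : z ∈ Dom U) (k : Fin n) :
    ∑ j, z.2 j * pdy j (G k) z = 2 * G k z := by
  obtain ⟨x, y⟩ := z
  obtain ⟨hx, hy⟩ := hz
  have hy : y ≠ 0 := hy
  have hdiff : DifferentiableAt ℝ (G k) (x, y) :=
    (((hG.1 k).contDiffAt ((isOpen_dom hU).mem_nhds ⟨hx, hy⟩)).differentiableAt (by simp))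
  have hin : HasDerivAt (fun L : ℝ => ((x, L • y) : E n)) (((0 : Fin n → ℝ), y)) 1 := by
    have h1 : HasDerivAt (fun L : ℝ => L • y) ((1:ℝ) • y) 1 := (hasDerivAt_id 1).smul_const y
    have h2 : HasDerivAt (fun _ : ℝ => x) (0 : Fin n → ℝ) 1 := hasDerivAt_const 1 x
    simpa using h2.prodMk h1
  have h1 : HasDerivAt (fun L : ℝ => G k (x, L • y)) (fderiv ℝ (G k) (x, y) (0, y)) 1 := by
    have hd2 : HasFDerivAt (G k) (fderiv ℝ (G k) (x, y)) (x, (1:ℝ) • y) := by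
      rw [one_smul]; exact hdiff.hasFDerivAt
    have := hd2.comp_hasDerivAt 1 hin
    exact this
  have h2 : HasDerivAt (fun L : ℝ => L ^ 2 * G k (x, y)) (2 * G k (x, y)) 1 := by
    simpa using (hasDerivAt_pow 2 (1:ℝ)).mul_const (G k (x, y))
  have heq : (fun L : ℝ => G k (x, L • y)) =ᶠ[nhds (1:ℝ)] fun L => L ^ 2 * G k (x, y) := by
    filter_upwards [eventually_gt_nhds (by norm_num : (0:ℝ) < 1)] with L hL
    exact hG.2 k x hx y hy L hL
  have h1' : HasDerivAt (fun L : ℝ => L ^ 2 * G k (x, y)) (fderiv ℝ (G k) (x, y) (0, y)) 1 :=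
    h1.congr_of_eventuallyEq heq.symm
  have := h1'.unique h2
  rw [← this, fderiv_v]
  rfl

/-- If a semi-basic 1-form `θ` satisfies `L_Cθ = 0`, `d_Jθ = 0` and
`d_hθ = 0`, then `F = yᵏθᵏ` satisfies `∂F/∂yⁱ = θᵢ` and
`∂F/∂xⁱ = S(θᵢ)`, i.e. `L_Sθ = dF`. -/
theorem lie_derivative_theta_is_dF {n : ℕ}
    (U : Set (Fin n → ℝ)) (hU : IsOpen U)
    (G : Fin n → E n → ℝ) (hG : IsSpray U G)
    (θ : Fin n → E n → ℝ) (hθ : ∀ i, ContDiffOn ℝ (⊤ : ℕ∞) (θ i) (Dom U))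
    (hLC : ∀ z ∈ Dom U, ∀ i, (∑ j, z.2 j * pdy j (θ i) z) = 0)
    (hdJ : ∀ z ∈ Dom U, ∀ i j, pdy j (θ i) z = pdy i (θ j) z)
    (hdh : ∀ z ∈ Dom U, ∀ i j, delx G j (θ i) z = delx G i (θ j) z) :
    ∀ z ∈ Dom U, ∀ i,
      pdy i (fun w => ∑ k, w.2 k * θ k w) z = θ i z ∧
      pdx i (fun w => ∑ k, w.2 k * θ k w) z
        = (∑ k, z.2 k * pdx k (θ i) z) - 2 * ∑ k, G k z * pdy k (θ i) z := by
  intro z hz i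
  have hopen := isOpen_dom hU
  have hdθ : ∀ k, DifferentiableAt ℝ (θ k) z := fun k =>
    ((hθ k).contDiffAt (hopen.mem_nhds hz)).differentiableAt (by simp)
  set Lk : Fin n → E n →L[ℝ] ℝ := fun k =>
    (ContinuousLinearMap.proj k).comp (ContinuousLinearMap.snd ℝ (Fin n → ℝ) (Fin n → ℝ)) with hLk
  have hF : HasFDerivAt (fun w : E n => ∑ k, w.2 k * θ k w)
      (∑ k, (z.2 k • fderiv ℝ (θ k) z + θ k z • Lk k)) z := by
    refine HasFDerivAt.fun_sum fun k _ => ?_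
    exact ((Lk k).hasFDerivAt).mul (hdθ k).hasFDerivAt
  have hfd := hF.fderiv
  have hLky : ∀ k (v : Fin n → ℝ), Lk k ((0 : Fin n → ℝ), v) = v k := fun k v => rfl
  have hLkx : ∀ k (v : Fin n → ℝ), Lk k (v, (0 : Fin n → ℝ)) = 0 := fun k v => rfl
  constructor
  · rw [pdy, hfd]
    rw [ContinuousLinearMap.sum_apply]
    have : ∀ k, ((z.2 k • fderiv ℝ (θ k) z + θ k z • Lk k) ((0 : Fin n → ℝ), Pi.single i 1))
        = z.2 k * pdy i (θ k) z + θ k z * (Pi.single i 1 : Fin n → ℝ) k := fun k => by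
      simp only [ContinuousLinearMap.add_apply, ContinuousLinearMap.smul_apply, hLky,
        smul_eq_mul, pdy]
    rw [Finset.sum_congr rfl fun k _ => this k, Finset.sum_add_distrib]
    have h1 : ∑ k, z.2 k * pdy i (θ k) z = 0 := by
      rw [Finset.sum_congr rfl fun k _ => by rw [← hdJ z hz i k]]
      exact hLC z hz i
    have h2 : ∑ k, θ k z * (Pi.single i 1 : Fin n → ℝ) k = θ i z := by
      simp [Pi.single_apply]
    rw [h1, h2, zero_add]
  · rw [pdx, hfd, ContinuousLinearMap.sum_apply]
    have : ∀ k, ((z.2 k • fderiv ℝ (θ k) z + θ k z • Lk k) ((Pi.single i 1 : Fin n → ℝ), (0 : Fin n → ℝ)))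
        = z.2 k * pdx i (θ k) z := fun k => by
      simp only [ContinuousLinearMap.add_apply, ContinuousLinearMap.smul_apply, hLkx,
        smul_eq_mul, pdx, mul_zero, add_zero]
    rw [Finset.sum_congr rfl fun k _ => this k]
    have key : ∀ j, pdx i (θ j) z = pdx j (θ i) z
        - (∑ k, Nc G k j z * pdy k (θ i) z) + ∑ k, Nc G k i z * pdy k (θ j) z := by
      intro j
      have := hdh z hz i j
      unfold delx at this
      linarith
    rw [Finset.sum_congr rfl fun j _ => by rw [key j]]
    have expand : ∑ j, z.2 j * (pdx j (θ i) z - (∑ k, Nc G k j z * pdy k (θ i) z)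
        + ∑ k, Nc G k i z * pdy k (θ j) z)
        = (∑ j, z.2 j * pdx j (θ i) z)
          - (∑ j, ∑ k, z.2 j * (Nc G k j z * pdy k (θ i) z))
          + ∑ j, ∑ k, z.2 j * (Nc G k i z * pdy k (θ j) z) := by
      rw [← Finset.sum_sub_distrib, ← Finset.sum_add_distrib]
      refine Finset.sum_congr rfl fun j _ => ?_
      rw [mul_add, mul_sub, Finset.mul_sum, Finset.mul_sum]
    rw [expand]
    have t2 : ∑ j, ∑ k, z.2 j * (Nc G k j z * pdy k (θ i) z)
        = 2 * ∑ k, G k z * pdy k (θ i) z := by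
      rw [Finset.sum_comm, Finset.mul_sum]
      refine Finset.sum_congr rfl fun k _ => ?_
      have : ∑ j, z.2 j * (Nc G k j z * pdy k (θ i) z)
          = (∑ j, z.2 j * pdy j (G k) z) * pdy k (θ i) z := by
        rw [Finset.sum_mul]
        exact Finset.sum_congr rfl fun j _ => by rw [Nc]; ring
      rw [this, euler hU hG hz k]; ring
    have t3 : ∑ j, ∑ k, z.2 j * (Nc G k i z * pdy k (θ j) z) = 0 := by
      rw [Finset.sum_comm]
      refine Finset.sum_eq_zero fun k _ => ?_
      have : ∑ j, z.2 j * (Nc G k i z * pdy k (θ j) z)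
          = Nc G k i z * ∑ j, z.2 j * pdy j (θ k) z := by
        rw [Finset.mul_sum]
        exact Finset.sum_congr rfl fun j _ => by rw [hdJ z hz j k]; ring
      rw [this, hLC z hz k, mul_zero]
    rw [t2, t3, add_zero]

end PM
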